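/- Fix τ ∈ (0,1). The left limit of f at y*_τ equals y*_τ: f(y*_τ^−) := lim_{δ ↓ 0} f(y*_τ − δ) = y*_τ. -/

import Mathlib

/-!
Let `g(y) := pr^{(Γ(·,y), π₂*)}(Y ≤ y)`. Because `π₂*` turns `m + A₂ c` into `m + |c|` and
`Γ(h₁, y)` picks the first-stage action with the smaller conditional CDF at `y`,
`g(y) = ∫ min (I(y, F_ε, G(·,·|h₁,1)), I(y, F_ε, G(·,·|h₁,−1))) dμ(h₁)`, a mixture of CDFs,
hence itself a right-continuous CDF whose `τ`-quantile is `y*_τ`. For fixed `y`, the CDF `P_y` of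
the regime `(Γ(·,y), π₂*)` dominates `g` and agrees with it at `y`. So for `y < y*_τ`,
`P_y(y) = g(y) < τ ≤ g(y*_τ) ≤ P_y(y*_τ)`, which traps `f(y)` in `[y, y*_τ]`.
-/

open MeasureTheory ProbabilityTheory Filter Set

noncomputable section

/-- sign function: `1` if `0 ≤ x`, `−1` otherwise. -/
def sgn (x : ℝ) : ℝ := if 0 ≤ x then 1 else -1

/-- `pr^π(Y ≤ y)`, the CDF of the outcome induced by the regime `(π₁, π₂)`:
`∫∫ F_ε(y − m(h₂) − π₂(h₂) c(h₂)) κ((h₁, π₁(h₁)), dh₂) μ(dh₁)`. -/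
def prPi {X1 X2 : Type*} [MeasurableSpace X1] [MeasurableSpace X2]
    (μ : Measure X1) (κ : Kernel (X1 × ℝ) X2) (m c : X2 → ℝ) (Feps : ℝ → ℝ)
    (π₁ : X1 → ℝ) (π₂ : X2 → ℝ) (y : ℝ) : ℝ :=
  ∫ h₁, (∫ h₂, Feps (y - m h₂ - π₂ h₂ * c h₂) ∂(κ (h₁, π₁ h₁))) ∂μ

/-- `I(y, F, G) = ∫ F(y − u − |v|) dG(u,v)`. -/
def Ifun (y : ℝ) (F : ℝ → ℝ) (G : Measure (ℝ × ℝ)) : ℝ :=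
  ∫ p, F (y - p.1 - |p.2|) ∂G

/-- `G(·,· | h₁, a₁)`: the pushforward of `κ((h₁,a₁),·)` under `h₂ ↦ (m h₂, c h₂)`. -/
def Gdist {X1 X2 : Type*} [MeasurableSpace X1] [MeasurableSpace X2]
    (κ : Kernel (X1 × ℝ) X2) (m c : X2 → ℝ) (h₁ : X1) (a₁ : ℝ) : Measure (ℝ × ℝ) :=
  (κ (h₁, a₁)).map (fun h₂ => (m h₂, c h₂))

/-- `d(h₁, y) = I(y, F_ε, G(·,·|h₁,−1)) − I(y, F_ε, G(·,·|h₁,1))`. -/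
def dfun {X1 X2 : Type*} [MeasurableSpace X1] [MeasurableSpace X2]
    (κ : Kernel (X1 × ℝ) X2) (m c : X2 → ℝ) (Feps : ℝ → ℝ) (h₁ : X1) (y : ℝ) : ℝ :=
  Ifun y Feps (Gdist κ m c h₁ (-1)) - Ifun y Feps (Gdist κ m c h₁ 1)

/-- `Γ(h₁, y) = sgn(d(h₁, y))`. -/
def Gam {X1 X2 : Type*} [MeasurableSpace X1] [MeasurableSpace X2]
    (κ : Kernel (X1 × ℝ) X2) (m c : X2 → ℝ) (Feps : ℝ → ℝ) (h₁ : X1) (y : ℝ) : ℝ :=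
  sgn (dfun κ m c Feps h₁ y)

/-- `q^π(τ) = inf{y : pr^π(Y ≤ y) ≥ τ}`. -/
def quant {X1 X2 : Type*} [MeasurableSpace X1] [MeasurableSpace X2]
    (μ : Measure X1) (κ : Kernel (X1 × ℝ) X2) (m c : X2 → ℝ) (Feps : ℝ → ℝ)
    (τ : ℝ) (π₁ : X1 → ℝ) (π₂ : X2 → ℝ) : ℝ :=
  sInf {y : ℝ | τ ≤ prPi μ κ m c Feps π₁ π₂ y}

/-- `y*_τ = inf{y : pr^{(Γ(·,y), π₂*)}(Y ≤ y) ≥ τ}` where `π₂*(h₂) = sgn(c(h₂))`. -/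
def ystar {X1 X2 : Type*} [MeasurableSpace X1] [MeasurableSpace X2]
    (μ : Measure X1) (κ : Kernel (X1 × ℝ) X2) (m c : X2 → ℝ) (Feps : ℝ → ℝ)
    (τ : ℝ) : ℝ :=
  sInf {y : ℝ |
    τ ≤ prPi μ κ m c Feps (fun h₁ => Gam κ m c Feps h₁ y) (fun h₂ => sgn (c h₂)) y}

/-- `f(y) = q^{(Γ(·,y), π₂*)}(τ)`. -/
def fQIQ {X1 X2 : Type*} [MeasurableSpace X1] [MeasurableSpace X2]
    (μ : Measure X1) (κ : Kernel (X1 × ℝ) X2) (m c : X2 → ℝ) (Feps : ℝ → ℝ)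
    (τ : ℝ) (y : ℝ) : ℝ :=
  quant μ κ m c Feps τ (fun h₁ => Gam κ m c Feps h₁ y) (fun h₂ => sgn (c h₂))

open Topology

def quantile (F : ℝ → ℝ) (τ : ℝ) : ℝ := sInf {y | τ ≤ F y}

theorem Monotone.quantile_mem_Icc {P : ℝ → ℝ} (hP : Monotone P) {τ y z : ℝ}
    (hy : P y < τ) (hz : τ ≤ P z) : quantile P τ ∈ Icc y z := by
  have hlb : y ∈ lowerBounds {t | τ ≤ P t} := fun t ht =>
    le_of_not_gt fun hty => (hy.trans_le ht).not_ge (hP hty.le)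
  exact ⟨le_csInf ⟨z, hz⟩ hlb, csInf_le ⟨y, hlb⟩ hz⟩

structure IsCDF (F : ℝ → ℝ) : Prop where
  mono : Monotone F
  right_continuous : ∀ x, ContinuousWithinAt F (Ici x) x
  tendsto_atBot : Tendsto F atBot (𝓝 0)
  tendsto_atTop : Tendsto F atTop (𝓝 1)

namespace IsCDF

variable {F G : ℝ → ℝ} {τ : ℝ}

theorem mem_Icc (hF : IsCDF F) (x : ℝ) : F x ∈ Icc (0 : ℝ) 1 :=
  ⟨hF.mono.le_of_tendsto hF.tendsto_atBot x, hF.mono.ge_of_tendsto hF.tendsto_atTop x⟩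

theorem comp_sub_const (hF : IsCDF F) (a : ℝ) : IsCDF fun y => F (y - a) where
  mono _ _ h := hF.mono (sub_le_sub_right h a)
  right_continuous x := (hF.right_continuous (x - a)).comp (f := fun y => y - a)
    (continuous_sub_right a).continuousWithinAt fun _ hy => sub_le_sub_right hy a
  tendsto_atBot := hF.tendsto_atBot.comp <| by
    simpa only [sub_eq_add_neg, id] using tendsto_atBot_add_const_right atBot (-a) tendsto_id
  tendsto_atTop := hF.tendsto_atTop.comp <| by
    simpa only [sub_eq_add_neg, id] using tendsto_atTop_add_const_right atTop (-a) tendsto_id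

theorem min (hF : IsCDF F) (hG : IsCDF G) : IsCDF fun y => min (F y) (G y) where
  mono _ _ h := min_le_min (hF.mono h) (hG.mono h)
  right_continuous x := (hF.right_continuous x).min (hG.right_continuous x)
  tendsto_atBot := by simpa using hF.tendsto_atBot.min hG.tendsto_atBot
  tendsto_atTop := by simpa using hF.tendsto_atTop.min hG.tendsto_atTop

theorem integral {α : Type*} [MeasurableSpace α] {ν : Measure α} [IsProbabilityMeasure ν]
    {G : α → ℝ → ℝ} (hG : ∀ x, IsCDF (G x))
    (hmeas : ∀ y, AEStronglyMeasurable (fun x => G x y) ν) :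
    IsCDF fun y => ∫ x, G x y ∂ν := by
  have hint : ∀ y, Integrable (fun x => G x y) ν := fun y =>
    Integrable.of_mem_Icc 0 1 (hmeas y).aemeasurable (ae_of_all _ fun x => (hG x).mem_Icc y)
  have hlim : ∀ {l : Filter ℝ} [l.IsCountablyGenerated] {g : α → ℝ},
      (∀ x, Tendsto (G x) l (𝓝 (g x))) → Tendsto (fun y => ∫ x, G x y ∂ν) l (𝓝 (∫ x, g x ∂ν)) :=
    fun hg => tendsto_integral_filter_of_dominated_convergence (fun _ => 1)
      (Eventually.of_forall hmeas)
      (Eventually.of_forall fun y => ae_of_all _ fun x => by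
        rw [Real.norm_eq_abs, abs_le]
        exact ⟨by linarith [((hG x).mem_Icc y).1], ((hG x).mem_Icc y).2⟩)
      (integrable_const 1) (ae_of_all _ hg)
  refine ⟨fun y z h => integral_mono (hint y) (hint z) fun x => (hG x).mono h,
    fun y => hlim fun x => (hG x).right_continuous y, ?_, ?_⟩
  · simpa using hlim fun x => (hG x).tendsto_atBot
  · simpa using hlim fun x => (hG x).tendsto_atTop

theorem integral_comp_sub {α : Type*} [MeasurableSpace α] {ν : Measure α}
    [IsProbabilityMeasure ν] (hF : IsCDF F) {φ : α → ℝ} (hφ : Measurable φ) :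
    IsCDF fun y => ∫ x, F (y - φ x) ∂ν :=
  IsCDF.integral (fun x => hF.comp_sub_const (φ x)) fun _ =>
    (hF.mono.measurable.comp (measurable_const.sub hφ)).aestronglyMeasurable

theorem bddBelow_setOf_le (hF : IsCDF F) (hτ : 0 < τ) : BddBelow {y | τ ≤ F y} := by
  obtain ⟨b, hb⟩ := (hF.tendsto_atBot.eventually (eventually_lt_nhds hτ)).exists_forall_of_atBot
  exact ⟨b, fun y hy => le_of_not_gt fun hyb => (hb y hyb.le).not_ge hy⟩

theorem nonempty_setOf_le (hF : IsCDF F) (hτ : τ < 1) : {y | τ ≤ F y}.Nonempty :=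
  ((hF.tendsto_atTop.eventually (eventually_gt_nhds hτ)).exists).imp fun _ => le_of_lt

theorem apply_lt_of_lt_quantile (hF : IsCDF F) (hτ : 0 < τ) {y : ℝ}
    (hy : y < quantile F τ) : F y < τ :=
  lt_of_not_ge fun h => (csInf_le (hF.bddBelow_setOf_le hτ) h).not_gt hy

/-- Right continuity makes `{y | τ ≤ F y}` closed from the right, so it contains its infimum. -/
theorem le_apply_quantile (hF : IsCDF F) (hτ : τ ∈ Ioo 0 1) : τ ≤ F (quantile F τ) := by
  refine ge_of_tendsto ((hF.right_continuous _).mono Ioi_subset_Ici_self)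
    (eventually_nhdsWithin_of_forall fun y hy => ?_)
  obtain ⟨s, hs, hsy⟩ := exists_lt_of_csInf_lt (hF.nonempty_setOf_le hτ.2) hy
  exact hs.trans (hF.mono hsy.le)

theorem tendsto_quantile_sub {g : ℝ → ℝ} {P : ℝ → ℝ → ℝ} (hg : IsCDF g) (hτ : τ ∈ Ioo 0 1)
    (hP : ∀ y, Monotone (P y)) (hPg : ∀ y, P y y = g y) (hgP : ∀ y z, g z ≤ P y z) :
    Tendsto (fun δ => quantile (P (quantile g τ - δ)) τ) (𝓝[>] 0) (𝓝 (quantile g τ)) := by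
  set q := quantile g τ
  have hbracket : ∀ δ > 0, quantile (P (q - δ)) τ ∈ Icc (q - δ) q := fun δ hδ =>
    (hP (q - δ)).quantile_mem_Icc
      ((hPg _).trans_lt (hg.apply_lt_of_lt_quantile hτ.1 (sub_lt_self q hδ)))
      ((hg.le_apply_quantile hτ).trans (hgP _ _))
  refine tendsto_of_tendsto_of_tendsto_of_le_of_le' (g := fun δ => q - δ) ?_ tendsto_const_nhds
    (eventually_nhdsWithin_of_forall fun δ hδ => (hbracket δ hδ).1)
    (eventually_nhdsWithin_of_forall fun δ hδ => (hbracket δ hδ).2)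
  simpa using ((continuous_sub_left q).tendsto 0).mono_left nhdsWithin_le_nhds

end IsCDF

theorem sgn_mul_self (x : ℝ) : sgn x * x = |x| := by
  unfold sgn
  split_ifs with h
  · rw [one_mul, abs_of_nonneg h]
  · rw [neg_one_mul, abs_of_neg (not_le.mp h)]

theorem measurable_sgn : Measurable sgn :=
  Measurable.ite measurableSet_Ici measurable_const measurable_const

theorem isCDF_Ifun {F : ℝ → ℝ} (hF : IsCDF F) (G : Measure (ℝ × ℝ)) [IsProbabilityMeasure G] :
    IsCDF fun y => Ifun y F G := by
  simp only [Ifun, sub_sub]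
  exact hF.integral_comp_sub (measurable_fst.add measurable_snd.abs)

section TwoStage

variable {X1 X2 : Type*} [MeasurableSpace X1] [MeasurableSpace X2] {μ : Measure X1}
  {κ : Kernel (X1 × ℝ) X2} {m c : X2 → ℝ} {Feps : ℝ → ℝ}

theorem Ifun_Gdist (hm : Measurable m) (hc : Measurable c) (hF : Measurable Feps)
    (h₁ : X1) (a y : ℝ) :
    Ifun y Feps (Gdist κ m c h₁ a) = ∫ h₂, Feps (y - m h₂ - |c h₂|) ∂κ (h₁, a) :=
  integral_map (hm.prodMk hc).aemeasurable
    (hF.comp ((measurable_const.sub measurable_fst).sub measurable_snd.abs)).aestronglyMeasurable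

theorem measurable_Ifun_Gdist (hm : Measurable m) (hc : Measurable c) (hF : Measurable Feps)
    {π₁ : X1 → ℝ} (hπ₁ : Measurable π₁) (y : ℝ) :
    Measurable fun h₁ => Ifun y Feps (Gdist κ m c h₁ (π₁ h₁)) := by
  simp only [Ifun_Gdist hm hc hF]
  exact (hF.comp ((measurable_const.sub hm).sub hc.abs)).stronglyMeasurable.integral_kernel
    |>.measurable.comp (measurable_id.prodMk hπ₁)

theorem isCDF_Ifun_Gdist [IsMarkovKernel κ] (hm : Measurable m) (hc : Measurable c)
    (hF : IsCDF Feps) (h₁ : X1) (a : ℝ) : IsCDF fun y => Ifun y Feps (Gdist κ m c h₁ a) :=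
  have : IsProbabilityMeasure (Gdist κ m c h₁ a) :=
    Measure.isProbabilityMeasure_map (hm.prodMk hc).aemeasurable
  isCDF_Ifun hF _

theorem measurable_Gam (hm : Measurable m) (hc : Measurable c) (hF : Measurable Feps) (y : ℝ) :
    Measurable fun h₁ => Gam κ m c Feps h₁ y :=
  measurable_sgn.comp ((measurable_Ifun_Gdist hm hc hF measurable_const y).sub
    (measurable_Ifun_Gdist hm hc hF measurable_const y))

theorem Ifun_Gam_self (h₁ : X1) (y : ℝ) :
    Ifun y Feps (Gdist κ m c h₁ (Gam κ m c Feps h₁ y)) =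
      min (Ifun y Feps (Gdist κ m c h₁ 1)) (Ifun y Feps (Gdist κ m c h₁ (-1))) := by
  unfold Gam dfun sgn
  split_ifs with h
  · exact (min_eq_left (by linarith)).symm
  · exact (min_eq_right (by linarith)).symm

theorem min_le_Ifun_Gam (h₁ : X1) (y z : ℝ) :
    min (Ifun z Feps (Gdist κ m c h₁ 1)) (Ifun z Feps (Gdist κ m c h₁ (-1))) ≤
      Ifun z Feps (Gdist κ m c h₁ (Gam κ m c Feps h₁ y)) := by
  unfold Gam sgn
  split_ifs
  · exact min_le_left _ _
  · exact min_le_right _ _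

theorem prPi_sgn (hm : Measurable m) (hc : Measurable c) (hF : Measurable Feps)
    (π₁ : X1 → ℝ) (y : ℝ) :
    prPi μ κ m c Feps π₁ (fun h₂ => sgn (c h₂)) y =
      ∫ h₁, Ifun y Feps (Gdist κ m c h₁ (π₁ h₁)) ∂μ := by
  simp only [prPi, Ifun_Gdist hm hc hF, sgn_mul_self]

theorem isCDF_prPi_sgn [IsProbabilityMeasure μ] [IsMarkovKernel κ] (hm : Measurable m)
    (hc : Measurable c) (hF : IsCDF Feps) {π₁ : X1 → ℝ} (hπ₁ : Measurable π₁) :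
    IsCDF (prPi μ κ m c Feps π₁ fun h₂ => sgn (c h₂)) := by
  simp only [funext (prPi_sgn hm hc hF.mono.measurable π₁)]
  exact IsCDF.integral (fun h₁ => isCDF_Ifun_Gdist hm hc hF h₁ _)
    fun y => (measurable_Ifun_Gdist hm hc hF.mono.measurable hπ₁ y).aestronglyMeasurable

/-- `y ↦ pr^{(Γ(·,y), π₂*)}(Y ≤ y)`, by `prPi_Gam_self`. -/
def optCDF (μ : Measure X1) (κ : Kernel (X1 × ℝ) X2) (m c : X2 → ℝ) (Feps : ℝ → ℝ)
    (y : ℝ) : ℝ :=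
  ∫ h₁, min (Ifun y Feps (Gdist κ m c h₁ 1)) (Ifun y Feps (Gdist κ m c h₁ (-1))) ∂μ

theorem isCDF_optCDF [IsProbabilityMeasure μ] [IsMarkovKernel κ] (hm : Measurable m)
    (hc : Measurable c) (hF : IsCDF Feps) : IsCDF (optCDF μ κ m c Feps) :=
  IsCDF.integral (fun h₁ => (isCDF_Ifun_Gdist hm hc hF h₁ 1).min (isCDF_Ifun_Gdist hm hc hF h₁ _))
    fun y => ((measurable_Ifun_Gdist hm hc hF.mono.measurable measurable_const y).min
      (measurable_Ifun_Gdist hm hc hF.mono.measurable measurable_const y)).aestronglyMeasurable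

theorem prPi_Gam_self (hm : Measurable m) (hc : Measurable c) (hF : Measurable Feps) (y : ℝ) :
    prPi μ κ m c Feps (fun h₁ => Gam κ m c Feps h₁ y) (fun h₂ => sgn (c h₂)) y =
      optCDF μ κ m c Feps y := by
  simp only [prPi_sgn hm hc hF, Ifun_Gam_self, optCDF]

theorem optCDF_le_prPi_Gam [IsProbabilityMeasure μ] [IsMarkovKernel κ] (hm : Measurable m)
    (hc : Measurable c) (hF : IsCDF Feps) (y z : ℝ) :
    optCDF μ κ m c Feps z ≤
      prPi μ κ m c Feps (fun h₁ => Gam κ m c Feps h₁ y) (fun h₂ => sgn (c h₂)) z := by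
  rw [prPi_sgn hm hc hF.mono.measurable]
  refine integral_mono_of_nonneg
    (ae_of_all _ fun h₁ => le_min ((isCDF_Ifun_Gdist hm hc hF h₁ _).mem_Icc z).1
      ((isCDF_Ifun_Gdist hm hc hF h₁ _).mem_Icc z).1) ?_
    (ae_of_all _ fun h₁ => min_le_Ifun_Gam h₁ y z)
  exact Integrable.of_mem_Icc 0 1
    (measurable_Ifun_Gdist hm hc hF.mono.measurable (measurable_Gam hm hc hF.mono.measurable y)
      z).aemeasurable
    (ae_of_all _ fun h₁ => (isCDF_Ifun_Gdist hm hc hF h₁ _).mem_Icc z)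

end TwoStage

theorem stmt10_general
    {X1 X2 : Type*} [MeasurableSpace X1] [MeasurableSpace X2]
    (μ : Measure X1) [IsProbabilityMeasure μ]
    (κ : Kernel (X1 × ℝ) X2) [IsMarkovKernel κ]
    (m c : X2 → ℝ) (hm : Measurable m) (hc : Measurable c)
    (Feps : ℝ → ℝ) (hF_mono : Monotone Feps)
    (hF_rc : ∀ x : ℝ, ContinuousWithinAt Feps (Ici x) x)
    (hF_bot : Tendsto Feps atBot (nhds 0)) (hF_top : Tendsto Feps atTop (nhds 1))
    (τ : ℝ) (hτ : τ ∈ Ioo (0:ℝ) 1) :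
    Tendsto (fun δ : ℝ => fQIQ μ κ m c Feps τ (ystar μ κ m c Feps τ - δ))
      (nhdsWithin 0 (Ioi 0)) (nhds (ystar μ κ m c Feps τ)) := by
  have hF : IsCDF Feps := ⟨hF_mono, hF_rc, hF_bot, hF_top⟩
  have hystar : ystar μ κ m c Feps τ = quantile (optCDF μ κ m c Feps) τ := by
    simp only [ystar, quantile, prPi_Gam_self hm hc hF_mono.measurable]
  rw [hystar]
  -- `fQIQ μ κ m c Feps τ y` unfolds to `quantile (P y) τ`.
  exact (isCDF_optCDF hm hc hF).tendsto_quantile_sub (P := fun y =>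
      prPi μ κ m c Feps (fun h₁ => Gam κ m c Feps h₁ y) fun h₂ => sgn (c h₂)) hτ
    (fun y => (isCDF_prPi_sgn hm hc hF (measurable_Gam hm hc hF_mono.measurable y)).mono)
    (prPi_Gam_self hm hc hF_mono.measurable) (optCDF_le_prPi_Gam hm hc hF)

/-- fix `τ ∈ (0,1)`. The left limit of `f` at `y*_τ` equals `y*_τ`:
`f(y*_τ⁻) = lim_{δ ↓ 0} f(y*_τ − δ) = y*_τ`. -/
theorem stmt10
    {X1 X2 : Type*} [MeasurableSpace X1] [MeasurableSpace X2]
    [StandardBorelSpace X1] [StandardBorelSpace X2]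
    (μ : Measure X1) [IsProbabilityMeasure μ]
    (κ : Kernel (X1 × ℝ) X2) [IsMarkovKernel κ]
    (m c : X2 → ℝ) (hm : Measurable m) (hc : Measurable c)
    (Feps : ℝ → ℝ) (hF_mono : Monotone Feps)
    (hF_rc : ∀ x : ℝ, ContinuousWithinAt Feps (Ici x) x)
    (hF_bot : Tendsto Feps atBot (nhds 0)) (hF_top : Tendsto Feps atTop (nhds 1))
    (hF_mem : ∀ x : ℝ, Feps x ∈ Icc (0:ℝ) 1)
    (τ : ℝ) (hτ : τ ∈ Ioo (0:ℝ) 1) :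
    Tendsto (fun δ : ℝ => fQIQ μ κ m c Feps τ (ystar μ κ m c Feps τ - δ))
      (nhdsWithin 0 (Ioi 0)) (nhds (ystar μ κ m c Feps τ)) :=
  stmt10_general μ κ m c hm hc Feps hF_mono hF_rc hF_bot hF_top τ hτ
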